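/- Let G = (V,E) be a finite simple graph and let p ∈ [0,1]^V lie in the interior Shearer set of G, i.e. Ξ_{G[W]}(p) > 0 for every W ⊆ V. Let Y be distributed according to Shearer's measure μ_{G,p}. Then for every W ⊆ V, every v ∈ V ∖ W and every s ∈ {0,1}^W with μ_{G,p}(Y_W = s) > 0 one has μ_{G,p}(Y_v = 1 ∣ Y_W = s) ≥ Ξ_{G[W∪{v}]}(p) / Ξ_{G[W]}(p) > 0. -/

import Mathlib

open MeasureTheory Finset
open scoped Classical

/-- The critical function Ξ_{G[W]}(p). -/
noncomputable def Xi {V : Type*} (G : SimpleGraph V) (W : Finset V) (p : V → ℝ) : ℝ :=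
  ∑ T ∈ W.powerset,
    if ∀ u ∈ T, ∀ w ∈ T, ¬ G.Adj u w then ∏ v ∈ T, -(1 - p v) else 0

/-- Cylinder event. -/
def cylEvt {V : Type*} (S : Finset V) (s : V → Bool) : Set (V → Bool) :=
  {ω | ∀ v ∈ S, ω v = s v}

def WeakDep {V : Type*} (G : SimpleGraph V) (p : V → ℝ)
    (μ : Measure (V → Bool)) : Prop :=
  IsProbabilityMeasure μ ∧
  ∀ (v : V) (S : Finset V), (∀ w ∈ S, w ≠ v ∧ ¬ G.Adj v w) →
    ∀ s : V → Bool, 0 < (μ (cylEvt S s)).toReal →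
      p v ≤ (μ ({ω | ω v = true} ∩ cylEvt S s)).toReal / (μ (cylEvt S s)).toReal

def StrongDep {V : Type*} (G : SimpleGraph V) (p : V → ℝ)
    (μ : Measure (V → Bool)) : Prop :=
  IsProbabilityMeasure μ ∧
  (∀ v : V, (μ {ω | ω v = true}).toReal = p v) ∧
  ∀ (S₁ S₂ : Finset V), (∀ u ∈ S₁, ∀ w ∈ S₂, u ≠ w ∧ ¬ G.Adj u w) →
    ∀ s₁ s₂ : V → Bool,
      μ (cylEvt S₁ s₁ ∩ cylEvt S₂ s₂) = μ (cylEvt S₁ s₁) * μ (cylEvt S₂ s₂)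

/-- Expectation of f under product field π_c restricted to W. -/
noncomputable def prodExp {V : Type*} (c : V → ℝ) (W : Finset V)
    (f : (W → Bool) → ℝ) : ℝ :=
  ∑ s : W → Bool, (∏ v : W, if s v then c v.1 else 1 - c v.1) * f s

/-- μ stochastically dominates the Bernoulli product field π_c. -/
def DomProd {V : Type*} (μ : Measure (V → Bool)) (c : V → ℝ) : Prop :=
  ∀ (W : Finset V) (f : (W → Bool) → ℝ), Monotone f →
    prodExp c W f ≤ ∫ ω, f (fun v => ω v.1) ∂μ

/-- ν is the Bernoulli product field π_c. -/
def IsProduct {V : Type*} (c : V → ℝ) (μ : Measure (V → Bool)) : Prop :=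
  IsProbabilityMeasure μ ∧
  ∀ (S : Finset V) (s : V → Bool),
    μ (cylEvt S s) = ∏ v ∈ S, ENNReal.ofReal (if s v then c v else 1 - c v)

/-- μ is Shearer's measure μ_{G,p}. -/
def IsShearer {V : Type*} [Fintype V] (G : SimpleGraph V) (p : V → ℝ)
    (μ : Measure (V → Bool)) : Prop :=
  IsProbabilityMeasure μ ∧
  ∀ W : Finset V,
    (μ {ω | ∀ v, (ω v = false ↔ v ∈ W)}).toReal =
      ∑ T ∈ (Finset.univ : Finset V).powerset,
        if W ⊆ T ∧ ∀ u ∈ T, ∀ w ∈ T, ¬ G.Adj u w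
        then (-1 : ℝ) ^ (T.card - W.card) * ∏ v ∈ T, (1 - p v) else 0

/-!
Shearer's measure of a pinned event is explicit: for disjoint `A`, `B`,
`μ(Y ≡ 0 on A, Y ≡ 1 on B) = [A independent] · ∏_{a ∈ A} q_a · Ξ(B ∖ N(A))`.
On atoms (`A ∪ B = V`) this is the defining formula after writing each independent `T ⊇ A` as
`A ∪ S` with `S ⊆ B ∖ N(A)`; it propagates to all pinned events by splitting on the value at one
free vertex `u` and using the recursion `Ξ(U + u) = Ξ(U) − q_u Ξ(U ∖ N(u))`.

Hence `μ(Y_v = 1 ∣ Y_W = s)` is `1` if `v` has a neighbour pinned to `0`, and otherwise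
`Ξ(B' + v) / Ξ(B')` for some `B' ⊆ W`. In the interior of the Shearer set the ratio
`r(U) = Ξ(U + v) / Ξ(U)` is antitone in `U`: for `U = U' + w`, expanding `Ξ(U)` and `Ξ(U + v)`
at `w` reduces `r(U) ≤ r(U')` to `Ξ(U' + v) ≤ Ξ(U')` if `w ~ v`, and otherwise to
`r(U') ≤ r(U' ∖ N(w))`, an instance for a smaller set. So the conditional probability is at least
`Ξ(W + v) / Ξ(W)`.
-/

section IndependentSets

variable {V : Type*} (G : SimpleGraph V)

abbrev IsIndep (T : Finset V) : Prop :=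
  ∀ u ∈ T, ∀ w ∈ T, ¬ G.Adj u w

noncomputable def nonNbrs (A B : Finset V) : Finset V :=
  B.filter fun b => ∀ a ∈ A, ¬ G.Adj a b

variable {G}

lemma IsIndep.mono {S T : Finset V} (hT : IsIndep G T) (hST : S ⊆ T) : IsIndep G S :=
  fun u hu w hw => hT u (hST hu) w (hST hw)

lemma isIndep_singleton (v : V) : IsIndep G {v} := by
  simp [IsIndep]

lemma isIndep_union_iff [DecidableEq V] {A S : Finset V} (hA : IsIndep G A) :
    IsIndep G (A ∪ S) ↔ IsIndep G S ∧ ∀ b ∈ S, ∀ a ∈ A, ¬ G.Adj a b := by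
  refine ⟨fun h => ⟨h.mono subset_union_right,
    fun b hb a ha => h a (mem_union_left _ ha) b (mem_union_right _ hb)⟩, ?_⟩
  rintro ⟨hS, hAS⟩ u hu w hw
  rcases mem_union.1 hu with hu | hu <;> rcases mem_union.1 hw with hw | hw
  · exact hA u hu w hw
  · exact hAS w hw u hu
  · exact fun h => hAS u hu w hw h.symm
  · exact hS u hu w hw

lemma isIndep_insert_iff [DecidableEq V] {A : Finset V} {u : V} :
    IsIndep G (insert u A) ↔ IsIndep G A ∧ ∀ a ∈ A, ¬ G.Adj a u := by
  rw [insert_eq, isIndep_union_iff (isIndep_singleton u)]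
  simp [G.adj_comm u]

lemma nonNbrs_subset (A B : Finset V) : nonNbrs G A B ⊆ B := filter_subset _ _

lemma subset_nonNbrs_iff {A B S : Finset V} :
    S ⊆ nonNbrs G A B ↔ S ⊆ B ∧ ∀ b ∈ S, ∀ a ∈ A, ¬ G.Adj a b := by
  simp only [subset_iff, nonNbrs, mem_filter]
  exact ⟨fun h => ⟨fun b hb => (h hb).1, fun b hb => (h hb).2⟩,
    fun h b hb => ⟨h.1 hb, h.2 b hb⟩⟩

variable [DecidableEq V]

lemma nonNbrs_insert_left (A B : Finset V) (u : V) :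
    nonNbrs G (insert u A) B = nonNbrs G {u} (nonNbrs G A B) := by
  ext b
  simp only [nonNbrs, mem_filter, forall_mem_insert, mem_singleton, forall_eq]
  tauto

lemma nonNbrs_insert_right_of_forall {A B : Finset V} {u : V} (hu : ∀ a ∈ A, ¬ G.Adj a u) :
    nonNbrs G A (insert u B) = insert u (nonNbrs G A B) := by
  rw [nonNbrs, nonNbrs, filter_insert, if_pos hu]

lemma nonNbrs_insert_right_of_not_forall {A B : Finset V} {u : V} (hu : ¬ ∀ a ∈ A, ¬ G.Adj a u) :
    nonNbrs G A (insert u B) = nonNbrs G A B := by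
  rw [nonNbrs, nonNbrs, filter_insert, if_neg hu]

end IndependentSets

section CriticalFunction

variable {V : Type*} [DecidableEq V] {G : SimpleGraph V} {p : V → ℝ}

lemma Xi_nonNbrs_eq_sum {A : Finset V} (hA : IsIndep G A) (B : Finset V) :
    Xi G (nonNbrs G A B) p =
      ∑ S ∈ B.powerset, if IsIndep G (A ∪ S) then ∏ v ∈ S, -(1 - p v) else 0 := by
  refine sum_subset_zero_on_sdiff (powerset_mono.2 (nonNbrs_subset A B)) ?_ ?_
  · intro S hS
    simp only [mem_sdiff, mem_powerset, subset_nonNbrs_iff] at hS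
    exact if_neg fun h => hS.2 ⟨hS.1, ((isIndep_union_iff hA).1 h).2⟩
  · intro S hS
    rw [mem_powerset, subset_nonNbrs_iff] at hS
    exact if_congr (by rw [isIndep_union_iff hA, and_iff_left hS.2]) rfl rfl

lemma Xi_insert {U : Finset V} {v : V} (hv : v ∉ U) :
    Xi G (insert v U) p = Xi G U p - (1 - p v) * Xi G (nonNbrs G {v} U) p := by
  rw [Xi_nonNbrs_eq_sum (isIndep_singleton v), mul_sum, sub_eq_add_neg, ← sum_neg_distrib]
  unfold Xi
  rw [sum_powerset_insert hv]
  refine congrArg _ (sum_congr rfl fun T hT => ?_)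
  have hvT : v ∉ T := fun h => hv (mem_powerset.1 hT h)
  rw [← insert_eq, prod_insert hvT]
  split_ifs <;> ring

lemma Xi_insert_le (hp : ∀ v, p v ≤ 1) (hpos : ∀ W, 0 < Xi G W p) {U : Finset V} {v : V}
    (hv : v ∉ U) : Xi G (insert v U) p ≤ Xi G U p := by
  rw [Xi_insert hv]
  linarith [mul_nonneg (sub_nonneg.2 (hp v)) (hpos (nonNbrs G {v} U)).le]

lemma Xi_insert_div_insert_le (hp : ∀ v, p v ≤ 1) (hpos : ∀ W, 0 < Xi G W p) {U : Finset V}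
    {v w : V} (hv : v ∉ U) (hw : w ∉ U) (hvw : v ≠ w)
    (hN : Xi G (insert v U) p / Xi G U p ≤
      Xi G (insert v (nonNbrs G {w} U)) p / Xi G (nonNbrs G {w} U) p) :
    Xi G (insert v (insert w U)) p / Xi G (insert w U) p ≤ Xi G (insert v U) p / Xi G U p := by
  set N := nonNbrs G {w} U
  have key : Xi G (insert v U) p * Xi G N p ≤ Xi G (nonNbrs G {w} (insert v U)) p * Xi G U p := by
    by_cases hwv : G.Adj w v
    · rw [nonNbrs_insert_right_of_not_forall (by simpa using hwv), mul_comm]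
      exact mul_le_mul_of_nonneg_left (Xi_insert_le hp hpos hv) (hpos N).le
    · rw [nonNbrs_insert_right_of_forall (by simpa using hwv)]
      exact (div_le_div_iff₀ (hpos U) (hpos N)).1 hN
  have hwvU : w ∉ insert v U := by simp [hw, hvw.symm]
  rw [div_le_div_iff₀ (hpos _) (hpos U), insert_comm v w U, Xi_insert hwvU, Xi_insert hw]
  nlinarith [mul_le_mul_of_nonneg_left key (sub_nonneg.2 (hp w))]

theorem Xi_insert_div_antitone (hp : ∀ v, p v ≤ 1) (hpos : ∀ W, 0 < Xi G W p)
    {U₀ U : Finset V} (hU : U₀ ⊆ U) {v : V} (hv : v ∉ U) :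
    Xi G (insert v U) p / Xi G U p ≤ Xi G (insert v U₀) p / Xi G U₀ p := by
  induction U using Finset.strongInduction generalizing U₀ with
  | H U ih =>
  rcases hU.eq_or_ssubset with rfl | hU₀
  · exact le_rfl
  obtain ⟨w, hwU, hwU₀⟩ := exists_of_ssubset hU₀
  have hsub : U.erase w ⊂ U := erase_ssubset hwU
  have hv' : v ∉ U.erase w := fun h => hv (mem_of_mem_erase h)
  have hU₀' : U₀ ⊆ U.erase w := fun x hx => mem_erase.2 ⟨fun h => hwU₀ (h ▸ hx), hU hx⟩
  calc Xi G (insert v U) p / Xi G U p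
      = Xi G (insert v (insert w (U.erase w))) p / Xi G (insert w (U.erase w)) p := by
        rw [insert_erase hwU]
    _ ≤ Xi G (insert v (U.erase w)) p / Xi G (U.erase w) p :=
        Xi_insert_div_insert_le hp hpos hv' (notMem_erase w U) (fun h => hv (h ▸ hwU))
          (ih _ hsub (nonNbrs_subset _ _) hv')
    _ ≤ Xi G (insert v U₀) p / Xi G U₀ p := ih _ hsub hU₀' hv'

theorem Xi_insert_div_le_Xi_nonNbrs_div (hp : ∀ v, p v ≤ 1) (hpos : ∀ W, 0 < Xi G W p)
    {W A B : Finset V} (hB : B ⊆ W) {v : V} (hv : v ∉ W) :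
    Xi G (insert v W) p / Xi G W p ≤
      Xi G (nonNbrs G A (insert v B)) p / Xi G (nonNbrs G A B) p := by
  by_cases hvA : ∀ a ∈ A, ¬ G.Adj a v
  · rw [nonNbrs_insert_right_of_forall hvA]
    exact Xi_insert_div_antitone hp hpos ((nonNbrs_subset A B).trans hB) hv
  · rw [nonNbrs_insert_right_of_not_forall hvA, div_self (hpos _).ne', div_le_one (hpos W)]
    exact Xi_insert_le hp hpos hv

variable (G p) in
noncomputable def pinnedWeight (A B : Finset V) : ℝ :=
  if IsIndep G A then (∏ a ∈ A, (1 - p a)) * Xi G (nonNbrs G A B) p else 0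

lemma pinnedWeight_insert_add {A B : Finset V} {u : V} (huA : u ∉ A) (huB : u ∉ B) :
    pinnedWeight G p (insert u A) B + pinnedWeight G p A (insert u B) = pinnedWeight G p A B := by
  unfold pinnedWeight
  by_cases hA : IsIndep G A
  swap
  · rw [if_neg hA, if_neg hA, if_neg fun h => hA (h.mono (subset_insert u A)), add_zero]
  rw [if_pos hA, if_pos hA]
  by_cases hu : ∀ a ∈ A, ¬ G.Adj a u
  · have huN : u ∉ nonNbrs G A B := fun h => huB (nonNbrs_subset A B h)
    rw [if_pos (isIndep_insert_iff.2 ⟨hA, hu⟩), nonNbrs_insert_left, prod_insert huA,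
      nonNbrs_insert_right_of_forall hu, Xi_insert huN]
    ring
  · rw [if_neg fun h => hu (isIndep_insert_iff.1 h).2,
      nonNbrs_insert_right_of_not_forall hu, zero_add]

lemma sum_indep_supersets_eq_pinnedWeight {A B : Finset V} (hAB : Disjoint A B) :
    (∑ T ∈ (A ∪ B).powerset, if A ⊆ T ∧ IsIndep G T
      then (-1 : ℝ) ^ (T.card - A.card) * ∏ v ∈ T, (1 - p v) else 0) = pinnedWeight G p A B := by
  have hinj : Set.InjOn (A ∪ ·) (B.powerset : Set (Finset V)) := fun S hS S' hS' h => by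
    rw [← union_sdiff_cancel_left (disjoint_of_subset_right (mem_powerset.1 hS) hAB),
      ← union_sdiff_cancel_left (disjoint_of_subset_right (mem_powerset.1 hS') hAB)]
    exact congrArg (· \ A) h
  calc (∑ T ∈ (A ∪ B).powerset, if A ⊆ T ∧ IsIndep G T
          then (-1 : ℝ) ^ (T.card - A.card) * ∏ v ∈ T, (1 - p v) else 0)
      = ∑ T ∈ Icc A (A ∪ B), if IsIndep G T
          then (-1 : ℝ) ^ (T.card - A.card) * ∏ v ∈ T, (1 - p v) else 0 := by
        rw [Icc_eq_filter_powerset, sum_filter]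
        exact sum_congr rfl fun T _ => ite_and _ _ _ _
    _ = ∑ S ∈ B.powerset, if IsIndep G (A ∪ S)
          then (-1 : ℝ) ^ ((A ∪ S).card - A.card) * ∏ v ∈ A ∪ S, (1 - p v) else 0 := by
        rw [Icc_eq_image_powerset subset_union_left, union_sdiff_cancel_left hAB, sum_image hinj]
    _ = (∏ a ∈ A, (1 - p a)) *
          ∑ S ∈ B.powerset, if IsIndep G (A ∪ S) then ∏ v ∈ S, -(1 - p v) else 0 := by
        rw [mul_sum]
        refine sum_congr rfl fun S hS => ?_
        have hAS : Disjoint A S := disjoint_of_subset_right (mem_powerset.1 hS) hAB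
        rw [mul_ite, mul_zero, card_union_of_disjoint hAS, Nat.add_sub_cancel_left,
          prod_union hAS, prod_neg]
        split_ifs <;> ring
    _ = pinnedWeight G p A B := by
        unfold pinnedWeight
        split_ifs with hA
        · rw [Xi_nonNbrs_eq_sum hA]
        · refine mul_eq_zero_of_right _ (sum_eq_zero fun S _ => if_neg fun h => hA ?_)
          exact h.mono subset_union_left

end CriticalFunction

section PinnedEvent

variable {V : Type*}

def pinned (A B : Finset V) : Set (V → Bool) :=
  {ω | (∀ a ∈ A, ω a = false) ∧ ∀ b ∈ B, ω b = true}

lemma cylEvt_eq_pinned (S : Finset V) (s : V → Bool) :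
    cylEvt S s = pinned (S.filter (s · = false)) (S.filter (s · = true)) := by
  ext ω
  simp only [cylEvt, pinned, Set.mem_ofPred_eq, mem_filter, and_imp, ← forall_and]
  refine forall₂_congr fun v _ => ?_
  cases s v <;> cases ω v <;> simp

variable [DecidableEq V]

lemma setOf_true_inter_pinned (A B : Finset V) (v : V) :
    {ω | ω v = true} ∩ pinned A B = pinned A (insert v B) := by
  ext ω
  simp only [pinned, Set.mem_inter_iff, Set.mem_ofPred_eq, forall_mem_insert]
  tauto

lemma pinned_eq_union (A B : Finset V) (u : V) :
    pinned A B = pinned (insert u A) B ∪ pinned A (insert u B) := by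
  ext ω
  simp only [pinned, Set.mem_union, Set.mem_ofPred_eq, forall_mem_insert]
  cases ω u <;> simp

lemma disjoint_pinned_insert (A B : Finset V) (u : V) :
    Disjoint (pinned (insert u A) B) (pinned A (insert u B)) :=
  Set.disjoint_left.2 fun ω h₁ h₂ => by
    simp only [pinned, Set.mem_ofPred_eq, forall_mem_insert] at h₁ h₂
    simp [h₁.1.1] at h₂

lemma pinned_eq_atom [Fintype V] {A B : Finset V} (hAB : Disjoint A B) (hcov : A ∪ B = univ) :
    pinned A B = {ω | ∀ v, (ω v = false ↔ v ∈ A)} := by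
  ext ω
  refine ⟨fun ⟨hA, hB⟩ v => ⟨fun hv => ?_, hA v⟩, fun h => ⟨fun a ha => (h a).2 ha, fun b hb => ?_⟩⟩
  · by_contra hvA
    have hvB : v ∈ B := (mem_union.1 (hcov ▸ mem_univ v)).resolve_left hvA
    simp [hB v hvB] at hv
  · simpa [disjoint_right.1 hAB hb] using h b

end PinnedEvent

section ShearerMeasure

variable {V : Type*} [Fintype V] [DecidableEq V] {G : SimpleGraph V} {p : V → ℝ}
  {μ : Measure (V → Bool)}

lemma IsShearer.measure_pinned_of_union_eq_univ (hμ : IsShearer G p μ) {A B : Finset V}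
    (hAB : Disjoint A B) (hcov : A ∪ B = univ) :
    (μ (pinned A B)).toReal = pinnedWeight G p A B := by
  obtain ⟨-, hatom⟩ := hμ
  rw [pinned_eq_atom hAB hcov, hatom A, ← hcov]
  refine (sum_congr rfl fun T _ => ?_).trans (sum_indep_supersets_eq_pinnedWeight hAB)
  -- the two sides differ only in their `Decidable` instances
  congr 1

theorem IsShearer.measure_pinned (hμ : IsShearer G p μ) {A B : Finset V} (hAB : Disjoint A B) :
    (μ (pinned A B)).toReal = pinnedWeight G p A B := by
  have : IsProbabilityMeasure μ := hμ.1
  obtain ⟨n, hn⟩ : ∃ n, (univ \ (A ∪ B)).card = n := ⟨_, rfl⟩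
  induction n generalizing A B with
  | zero =>
    refine hμ.measure_pinned_of_union_eq_univ hAB (eq_univ_of_forall fun v => ?_)
    by_contra hv
    exact (card_pos.2 ⟨v, mem_sdiff.2 ⟨mem_univ v, hv⟩⟩).ne' hn
  | succ n ih =>
    obtain ⟨u, hu⟩ : (univ \ (A ∪ B)).Nonempty := card_pos.1 (hn ▸ n.succ_pos)
    have huA : u ∉ A := fun h => (mem_sdiff.1 hu).2 (mem_union_left _ h)
    have huB : u ∉ B := fun h => (mem_sdiff.1 hu).2 (mem_union_right _ h)
    have hcard : (univ \ insert u (A ∪ B)).card = n := by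
      rw [sdiff_insert, card_erase_of_mem hu, hn, Nat.add_sub_cancel]
    rw [pinned_eq_union A B u, ← measureReal_def,
      measureReal_union (disjoint_pinned_insert A B u) (.of_discrete), measureReal_def,
      measureReal_def, ih (disjoint_insert_left.2 ⟨huB, hAB⟩) (by rwa [insert_union]),
      ih (disjoint_insert_right.2 ⟨huA, hAB⟩) (by rwa [union_insert]),
      pinnedWeight_insert_add huA huB]

theorem IsShearer.measure_pinned_insert_div (hμ : IsShearer G p μ) {A B : Finset V}
    (hAB : Disjoint A B) {v : V} (hvA : v ∉ A) (hpos : 0 < (μ (pinned A B)).toReal) :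
    (μ (pinned A (insert v B))).toReal / (μ (pinned A B)).toReal =
      Xi G (nonNbrs G A (insert v B)) p / Xi G (nonNbrs G A B) p := by
  rw [hμ.measure_pinned hAB] at hpos ⊢
  rw [hμ.measure_pinned (disjoint_insert_right.2 ⟨hvA, hAB⟩)]
  unfold pinnedWeight at hpos ⊢
  have hA : IsIndep G A := by
    by_contra hA
    rw [if_neg hA] at hpos
    exact hpos.false
  rw [if_pos hA] at hpos ⊢
  rw [if_pos hA, mul_div_mul_left _ _ (left_ne_zero_of_mul hpos.ne')]

end ShearerMeasure

/-- intrinsic conditional minorization for Shearer's measure. -/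
theorem stmt17 {V : Type*} [Fintype V] [DecidableEq V] (G : SimpleGraph V)
    (p : V → ℝ) (hp : ∀ v, p v ∈ Set.Icc (0:ℝ) 1)
    (hint : ∀ W : Finset V, 0 < Xi G W p)
    (μ : Measure (V → Bool)) (hμ : IsShearer G p μ) :
    ∀ (W : Finset V) (v : V), v ∉ W → ∀ s : V → Bool,
      0 < (μ (cylEvt W s)).toReal →
      Xi G (insert v W) p / Xi G W p ≤
        (μ ({ω | ω v = true} ∩ cylEvt W s)).toReal / (μ (cylEvt W s)).toReal ∧
      0 < Xi G (insert v W) p / Xi G W p := by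
  intro W v hvW s hcyl
  have hAB : Disjoint (W.filter (s · = false)) (W.filter (s · = true)) :=
    disjoint_filter.2 fun _ _ h => by simp [h]
  rw [cylEvt_eq_pinned] at hcyl ⊢
  rw [setOf_true_inter_pinned, hμ.measure_pinned_insert_div hAB
    (fun h => hvW (mem_filter.1 h).1) hcyl]
  exact ⟨Xi_insert_div_le_Xi_nonNbrs_div (fun v => (hp v).2) hint (filter_subset _ W) hvW,
    div_pos (hint _) (hint _)⟩
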